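/- arXiv:2105.10350 — 6 statements merged into one kernel-verified Lean document; each statement's English description precedes it below -/
import Mathlib

section
/- Let G=(V,E) be a DAG, let u,v,x be distinct vertices, and let W ⊆ V∖{u,v,x}. If u and v are d-connected given W in G but d-separated given W∪{x} in G, then x is definite ancestral to W∪{u,v}; that is, for every DAG G' Markov equivalent to G, x is an ancestor in G' of at least one element of W∪{u,v}. -/
/-! Basic graphical-model definitions: DAGs as binary relations on a finite
vertex type, d-separation via paths (lists of vertices), Markov equivalence,
and definite (non-)ancestral relations. -/

variable {V : Type*}

/-- Two nodes are adjacent in the digraph `E` if there is an edge between them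
in either direction. -/
def Adjacent (E : V → V → Prop) (a b : V) : Prop := E a b ∨ E b a

/-- A digraph is acyclic if it has no directed cycles. -/
def Acyclic (E : V → V → Prop) : Prop := ∀ v : V, ¬ Relation.TransGen E v v

/-- `u` is an ancestor of `v`: there is a directed path from `u` to `v`
(by convention, `v` is an ancestor of itself). -/
def Anc (E : V → V → Prop) (u v : V) : Prop := Relation.ReflTransGen E u v

/-- A list of vertices is a path in the skeleton of `E`: consecutive vertices
are adjacent and no vertex repeats. -/
def IsPath (E : V → V → Prop) (p : List V) : Prop :=
  p.Nodup ∧ List.Chain' (Adjacent E) p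

/-- A path `p` is d-connecting given the conditioning set `C` if every collider
on it is an ancestor of an element of `C` and every non-collider on it is
outside `C`.  Interior vertices of `p` are exactly the middle elements `x` of
consecutive triples `[a, x, b]` of `p`; such an `x` is a collider when both
incident edges point into it. -/
def IsDConnectingPath (E : V → V → Prop) (C : Set V) (p : List V) : Prop :=
  ∀ a x b : V, [a, x, b] <:+: p →
    ((E a x ∧ E b x) → ∃ c ∈ C, Anc E x c) ∧ (¬ (E a x ∧ E b x) → x ∉ C)

/-- `u` and `v` are d-connected given `C` in `E`. -/
def DConn (E : V → V → Prop) (C : Set V) (u v : V) : Prop :=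
  ∃ p : List V, IsPath E p ∧ p.head? = some u ∧ p.getLast? = some v ∧
    IsDConnectingPath E C p

/-- `u` and `v` are d-separated given `C` in `E`. -/
def DSep (E : V → V → Prop) (C : Set V) (u v : V) : Prop := ¬ DConn E C u v

/-- Two DAGs on the same vertex set are Markov equivalent if they have exactly
the same d-separation relations. -/
def MarkovEquiv (E E' : V → V → Prop) : Prop :=
  ∀ (u v : V) (C : Set V), u ≠ v → u ∉ C → v ∉ C → (DSep E C u v ↔ DSep E' C u v)

/-- `u` is definite ancestral to `v` (`u ⇝ v`): `u` is an ancestor of `v` in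
every DAG Markov equivalent to `E`. -/
def DefAnc (E : V → V → Prop) (u v : V) : Prop :=
  ∀ E' : V → V → Prop, Acyclic E' → MarkovEquiv E E' → Anc E' u v

/-- `u` is definite non-ancestral to `v` (`u ̸⇝ v`): `u` is not an ancestor of
`v` in any DAG Markov equivalent to `E`. -/
def DefNonAnc (E : V → V → Prop) (u v : V) : Prop :=
  ∀ E' : V → V → Prop, Acyclic E' → MarkovEquiv E E' → ¬ Anc E' u v

/-- The CPDAG of `E` has a directed edge `a → b` iff `a` and `b` are adjacent
and the edge is oriented `a → b` in every member of the Markov equivalence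
class of `E`. -/
def CPDAGDir (E : V → V → Prop) (a b : V) : Prop :=
  Adjacent E a b ∧ ∀ E' : V → V → Prop, Acyclic E' → MarkovEquiv E E' → E' a b

/-- A possibly directed path in the CPDAG of `E`: a path in the skeleton such
that no edge on it is directed backwards (as `x_{i+1} → x_i`) in the CPDAG. -/
def IsPossiblyDirectedPath (E : V → V → Prop) (p : List V) : Prop :=
  p.Nodup ∧ List.Chain' (fun a b => Adjacent E a b ∧ ¬ CPDAGDir E b a) p

/-- A path is unshielded if no three consecutive vertices on it are pairwise
adjacent. -/
def UnshieldedPath (E : V → V → Prop) (p : List V) : Prop :=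
  ∀ a x b : V, [a, x, b] <:+: p → ¬ Adjacent E a b

/-!
If a path `p` between `u` and `v` is d-connecting given `W` but not given `W ∪ {x}`, then `x`
must be a non-collider on `p`. Some edge of `p` at `x` points away from `x`; following `p` in
that direction, the edges keep pointing forward until the first collider, which is an ancestor
of `W`, or until the endpoint. Since d-connection and d-separation are shared by all members of
the Markov equivalence class, this argument applies to every such DAG.
-/

section DConnectingPath

variable {E : V → V → Prop} {C : Set V} {p : List V}

theorem IsDConnectingPath.reverse (hd : IsDConnectingPath E C p) :
    IsDConnectingPath E C p.reverse := by
  intro a z b h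
  have h' : [b, z, a] <:+: p := by simpa using List.reverse_infix.mpr h
  exact ⟨fun hcol => (hd b z a h').1 hcol.symm,
    fun hnc => (hd b z a h').2 fun hcol => hnc hcol.symm⟩

theorem IsDConnectingPath.exists_noncollider_of_not_union_singleton {x : V}
    (hd : IsDConnectingPath E C p) (hnot : ¬ IsDConnectingPath E (C ∪ {x}) p) :
    ∃ a b, [a, x, b] <:+: p ∧ ¬ (E a x ∧ E b x) := by
  simp only [IsDConnectingPath, not_forall] at hnot
  obtain ⟨a, z, b, htriple, hfail⟩ := hnot
  have hcol : E a z ∧ E b z → ∃ c ∈ C ∪ {x}, Anc E z c := fun hcol =>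
    let ⟨c, hc, hanc⟩ := (hd a z b htriple).1 hcol
    ⟨c, Or.inl hc, hanc⟩
  by_cases hnc : E a z ∧ E b z
  · exact absurd ⟨hcol, fun h => absurd hnc h⟩ hfail
  · have hz : z ∈ C ∪ {x} := by
      by_contra hz
      exact hfail ⟨hcol, fun _ => hz⟩
    have hzx : z = x := hz.resolve_left ((hd a z b htriple).2 hnc)
    exact ⟨a, b, hzx ▸ htriple, hzx ▸ hnc⟩

theorem IsDConnectingPath.exists_anc_of_edge_suffix (hd : IsDConnectingPath E C p)
    (hc : p.IsChain (Adjacent E)) {r : List V} {y b : V} (hs : y :: b :: r <:+ p) (hyb : E y b) :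
    ∃ w, (w ∈ C ∨ p.getLast? = some w) ∧ Anc E y w := by
  induction r generalizing y b with
  | nil =>
    obtain ⟨t, rfl⟩ := hs
    exact ⟨b, Or.inr (by simp), .single hyb⟩
  | cons c r ih =>
    have htriple : [y, b, c] <:+: p := by
      obtain ⟨t, ht⟩ := hs
      exact ⟨t, r, by simpa using ht⟩
    by_cases hcb : E c b
    · obtain ⟨w, hw, hanc⟩ := (hd y b c htriple).1 ⟨hyb, hcb⟩
      exact ⟨w, Or.inl hw, .head hyb hanc⟩
    · have hadj : Adjacent E y b ∧ Adjacent E b c := by simpa using hc.infix htriple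
      obtain ⟨w, hw, hanc⟩ :=
        ih ((List.suffix_cons y _).trans hs) (hadj.2.resolve_right hcb)
      exact ⟨w, hw, .head hyb hanc⟩

theorem IsDConnectingPath.exists_anc_of_infix_edge_right (hd : IsDConnectingPath E C p)
    (hc : p.IsChain (Adjacent E)) {a z b : V} (h : [a, z, b] <:+: p) (hzb : E z b) :
    ∃ w, (w ∈ C ∨ p.getLast? = some w) ∧ Anc E z w := by
  obtain ⟨l₁, l₂, rfl⟩ := h
  exact hd.exists_anc_of_edge_suffix hc (r := l₂) ⟨l₁ ++ [a], by simp⟩ hzb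

theorem IsDConnectingPath.exists_anc_of_noncollider (hd : IsDConnectingPath E C p)
    (hc : p.IsChain (Adjacent E)) {a z b : V} (h : [a, z, b] <:+: p)
    (hnc : ¬ (E a z ∧ E b z)) :
    ∃ w, (w ∈ C ∨ p.head? = some w ∨ p.getLast? = some w) ∧ Anc E z w := by
  have hadj : Adjacent E a z ∧ Adjacent E z b := by simpa using hc.infix h
  by_cases hzb : E z b
  · obtain ⟨w, hw, hanc⟩ := hd.exists_anc_of_infix_edge_right hc h hzb
    exact ⟨w, hw.imp_right Or.inr, hanc⟩
  · have hza : E z a := hadj.1.resolve_left fun haz => hnc ⟨haz, hadj.2.resolve_left hzb⟩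
    have hrev : [b, z, a] <:+: p.reverse := by simpa using List.reverse_infix.mpr h
    have hcrev : p.reverse.IsChain (Adjacent E) :=
      List.isChain_reverse.mpr (hc.imp fun _ _ h => h.symm)
    obtain ⟨w, hw, hanc⟩ := hd.reverse.exists_anc_of_infix_edge_right hcrev hrev hza
    rw [List.getLast?_reverse] at hw
    exact ⟨w, hw.imp_right Or.inl, hanc⟩

end DConnectingPath

theorem MarkovEquiv.dConn_iff {E E' : V → V → Prop} (h : MarkovEquiv E E') {C : Set V}
    {u v : V} (huv : u ≠ v) (hu : u ∉ C) (hv : v ∉ C) : DConn E C u v ↔ DConn E' C u v :=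
  not_iff_not.mp (h u v C huv hu hv)

theorem stmt2_general (E : V → V → Prop) (u v x : V) (W : Set V)
    (huv : u ≠ v) (hux : u ≠ x) (hvx : v ≠ x)
    (hWu : u ∉ W) (hWv : v ∉ W)
    (hconn : DConn E W u v) (hsep : DSep E (W ∪ {x}) u v) :
    ∀ E' : V → V → Prop, Acyclic E' → MarkovEquiv E E' →
      ∃ w : V, (w ∈ W ∨ w = u ∨ w = v) ∧ Anc E' x w := by
  intro E' _ hME
  have huWx : u ∉ W ∪ {x} := by simp [hWu, hux]
  have hvWx : v ∉ W ∪ {x} := by simp [hWv, hvx]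
  obtain ⟨p, hpath, hhead, hlast, hdW⟩ := (hME.dConn_iff huv hWu hWv).mp hconn
  have hnot : ¬ IsDConnectingPath E' (W ∪ {x}) p := fun hd =>
    (hME.dConn_iff huv huWx hvWx).not.mp hsep ⟨p, hpath, hhead, hlast, hd⟩
  obtain ⟨a, b, htriple, hnc⟩ := hdW.exists_noncollider_of_not_union_singleton hnot
  obtain ⟨w, hw, hanc⟩ := hdW.exists_anc_of_noncollider hpath.2 htriple hnc
  rw [hhead, hlast, Option.some_inj, Option.some_inj] at hw
  exact ⟨w, hw.imp_right (Or.imp Eq.symm Eq.symm), hanc⟩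

/-- Lemma 2, first bullet: if `u, v` are d-connected given `W`
but d-separated given `W ∪ {x}`, then `x` is definite ancestral to
`W ∪ {u, v}`. -/
theorem stmt2 [Fintype V] (E : V → V → Prop) (hE : Acyclic E) (u v x : V) (W : Set V)
    (huv : u ≠ v) (hux : u ≠ x) (hvx : v ≠ x)
    (hWu : u ∉ W) (hWv : v ∉ W) (hWx : x ∉ W)
    (hconn : DConn E W u v) (hsep : DSep E (W ∪ {x}) u v) :
    ∀ E' : V → V → Prop, Acyclic E' → MarkovEquiv E E' →
      ∃ w : V, (w ∈ W ∨ w = u ∨ w = v) ∧ Anc E' x w :=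
  stmt2_general E u v x W huv hux hvx hWu hWv hconn hsep
end

section
/- Let G=(V,E) be a DAG and let u,v,x be distinct vertices. If u and v are d-separated given V∖{u,v,x} in G and d-connected given V∖{u,v} in G, then x ̸⇝ w for every w ∈ V∖{x}; that is, x is a sink in every DAG Markov equivalent to G. -/
/-! Basic graphical-model definitions: DAGs as binary relations on a finite
vertex type, d-separation via paths (lists of vertices), Markov equivalence,
and definite (non-)ancestral relations. -/

variable {V : Type*}

lemma mem_of_getLast?_eq {α : Type*} {l : List α} {a : α}
    (h : l.getLast? = some a) : a ∈ l := by
  obtain ⟨h', rfl⟩ := List.mem_getLast?_eq_getLast (Option.mem_def.mpr h)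
  exact List.getLast_mem h'

/-- Core argument: in any single acyclic digraph with the two hypotheses,
`x` has no children. -/
lemma stmt5_core (E' : V → V → Prop) (hE' : Acyclic E') (u v x : V)
    (huv : u ≠ v)
    (hsep : DSep E' ({u, v, x}ᶜ : Set V) u v)
    (hconn : DConn E' ({u, v}ᶜ : Set V) u v) :
    ∀ w : V, ¬ E' x w := by
  obtain ⟨p, hpath, hhead, hlast, hdc⟩ := hconn
  match p with
  | [] => simp at hhead
  | [a] =>
    simp at hhead hlast
    exact absurd (hhead.symm.trans hlast) huv
  | [a, b] =>
    simp at hhead hlast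
    obtain rfl := hhead.symm; obtain rfl := hlast.symm
    exact absurd ⟨[u, v], hpath, by simp, by simp,
      fun a' x' b' hinf => absurd hinf.sublist.length_le (by simp)⟩ hsep
  | [a, b, c] =>
    simp at hhead hlast
    obtain rfl := hhead.symm; obtain rfl := hlast.symm
    obtain ⟨hnd, hch⟩ := hpath
    simp [List.nodup_cons] at hnd
    obtain ⟨⟨hub, _⟩, hbc⟩ := hnd
    -- b is a collider given {u,v}ᶜ
    have h1 := hdc u b v ⟨[], [], rfl⟩
    have hcol : E' u b ∧ E' v b := by
      by_contra h
      exact (h1.2 h) (by simp [Ne.symm hub, hbc])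
    -- b has no descendant outside {u,v,x}
    have hno : ¬ ∃ d ∈ ({u, v, x}ᶜ : Set V), Anc E' b d := by
      rintro ⟨d, hd, hanc⟩
      refine hsep ⟨[u, b, v], ⟨by simp [hub, hbc, huv], hch⟩, by simp, by simp, ?_⟩
      intro a' x' b' hinf
      have heq : [a', x', b'] = [u, b, v] := hinf.sublist.eq_of_length (by simp)
      simp only [List.cons.injEq] at heq
      obtain ⟨rfl, rfl, rfl, -⟩ := heq
      exact ⟨fun _ => ⟨d, hd, hanc⟩, fun hnc => absurd hcol hnc⟩
    -- hence b = x
    have hbx : b = x := by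
      by_contra hbx
      exact hno ⟨b, by simp [Ne.symm hub, hbc, hbx], Relation.ReflTransGen.refl⟩
    subst hbx
    intro w hw
    by_cases hwu : w = u
    · subst hwu
      exact hE' b (Relation.TransGen.head hw (Relation.TransGen.single hcol.1))
    by_cases hwv : w = v
    · subst hwv
      exact hE' b (Relation.TransGen.head hw (Relation.TransGen.single hcol.2))
    by_cases hwx : w = b
    · subst hwx
      exact hE' w (Relation.TransGen.single hw)
    exact hno ⟨w, by simp [hwu, hwv, hwx], Relation.ReflTransGen.single hw⟩
  | a :: b :: c :: d :: rest =>
    simp at hhead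
    obtain rfl := hhead.symm
    obtain ⟨hnd, hch⟩ := hpath
    have h1 := List.nodup_cons.mp hnd
    have h2 := List.nodup_cons.mp h1.2
    have h3 := List.nodup_cons.mp h2.2
    -- v is in c :: d :: rest and even in d :: rest
    have hl1 : (u :: b :: c :: d :: rest).getLast? = (c :: d :: rest).getLast? := by
      rw [List.getLast?_cons_cons, List.getLast?_cons_cons]
    have hl2 : (c :: d :: rest).getLast? = (d :: rest).getLast? :=
      List.getLast?_cons_cons ..
    have hvmem1 : v ∈ c :: d :: rest :=
      mem_of_getLast?_eq (hl1 ▸ hlast)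
    have hvmem2 : v ∈ d :: rest :=
      mem_of_getLast?_eq ((hl1.trans hl2) ▸ hlast)
    have hbu : b ≠ u := fun h => h1.1 (h ▸ List.mem_cons_self ..)
    have hcu : c ≠ u := fun h => h1.1 (h ▸ List.mem_cons_of_mem _ (List.mem_cons_self ..))
    have hbv : b ≠ v := fun h => h2.1 (h ▸ hvmem1)
    have hcv : c ≠ v := fun h => h3.1 (h ▸ hvmem2)
    -- b and c are both colliders, giving a 2-cycle
    have t1 := hdc u b c ⟨[], d :: rest, rfl⟩
    have t2 := hdc b c d ⟨[u], rest, rfl⟩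
    have hcol1 : E' u b ∧ E' c b := by
      by_contra h; exact (t1.2 h) (by simp [hbu, hbv])
    have hcol2 : E' b c ∧ E' d c := by
      by_contra h; exact (t2.2 h) (by simp [hcu, hcv])
    exact (hE' b (Relation.TransGen.head hcol2.1
      (Relation.TransGen.single hcol1.2))).elim

/-- Corollary 1: if `u, v` are d-separated given
`V ∖ {u,v,x}` and d-connected given `V ∖ {u,v}`, then `x ̸⇝ w` for every
`w ≠ x`; that is, `x` is a sink in every DAG Markov equivalent to `G`. -/
theorem stmt5 [Fintype V] (E : V → V → Prop) (hE : Acyclic E) (u v x : V)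
    (huv : u ≠ v) (hux : u ≠ x) (hvx : v ≠ x)
    (hsep : DSep E ({u, v, x}ᶜ : Set V) u v)
    (hconn : DConn E ({u, v}ᶜ : Set V) u v) :
    (∀ w : V, w ≠ x → DefNonAnc E x w) ∧
      (∀ E' : V → V → Prop, Acyclic E' → MarkovEquiv E E' → ∀ w : V, ¬ E' x w) := by
  have key : ∀ E' : V → V → Prop, Acyclic E' → MarkovEquiv E E' → ∀ w : V, ¬ E' x w := by
    intro E' hE' hME
    have hsep' : DSep E' ({u, v, x}ᶜ : Set V) u v :=
      (hME u v _ huv (by simp) (by simp)).mp hsep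
    have hconn' : DConn E' ({u, v}ᶜ : Set V) u v := by
      have h := (hME u v ({u, v}ᶜ : Set V) huv (by simp) (by simp)).not
      exact not_not.mp (h.mp (not_not_intro hconn))
    exact stmt5_core E' hE' u v x huv hsep' hconn'
  refine ⟨?_, key⟩
  intro w hwx E' hE' hME hanc
  rcases hanc.cases_head with heq | ⟨c, hxc, _⟩
  · exact hwx heq.symm
  · exact key E' hE' hME c hxc
end

section
/- (Correctness of DNA learning.) Let G be a DAG on V, let X=(X_v)_{v∈V} be random variables whose joint distribution P is Markov with respect to G, and let Ω and Ω̄ be collections of triples (u,v,S) (with u,v distinct vertices and S ⊆ V∖{u,v}) such that P is DNA-faithful to G with respect to (Ω,Ω̄). Then for any distinct vertices u,v,z and any S ⊆ V∖{u,v,z} such that (u,v,S) ∈ Ω and (u,v,S∪{z}) ∈ Ω̄, it holds that z ̸⇝ u, z ̸⇝ v, and z ̸⇝ s for every s ∈ S; in particular, every DNA relation recorded by the general DNA-learning framework (Algorithm 1) is a true definite non-ancestral relation in G. -/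
/-! Basic graphical-model definitions: DAGs as binary relations on a finite
vertex type, d-separation via paths (lists of vertices), Markov equivalence,
and definite (non-)ancestral relations. -/

variable {V : Type*}

open MeasureTheory ProbabilityTheory

/-- Conditional independence of `X u` and `X v` given the family of variables
`(X s)_{s ∈ S}`: conditional independence with respect to the σ-algebra
generated by `ω ↦ (X s ω)_{s ∈ S}`. -/
def CondIndepGiven {α : Type*} [mα : MeasurableSpace α] [StandardBorelSpace α]
    (μ : Measure α) [IsFiniteMeasure μ] (X : V → α → ℝ) (hX : ∀ w : V, Measurable (X w))
    (u v : V) (S : Set V) : Prop :=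
  CondIndepFun
    (MeasurableSpace.comap (fun ω (s : S) => X s ω) MeasurableSpace.pi)
    (Measurable.comap_le (measurable_pi_iff.mpr fun s : S => hX s))
    (X u) (X v) μ

/-- The joint distribution of `X` is Markov with respect to the DAG `E`:
d-separation implies conditional independence. -/
def MarkovTo {α : Type*} [mα : MeasurableSpace α] [StandardBorelSpace α]
    (μ : Measure α) [IsFiniteMeasure μ] (X : V → α → ℝ) (hX : ∀ w : V, Measurable (X w))
    (E : V → V → Prop) : Prop :=
  ∀ (u v : V) (S : Set V), u ≠ v → u ∉ S → v ∉ S →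
    DSep E S u v → CondIndepGiven μ X hX u v S

/-- DNA-faithfulness of the distribution of `X` to the DAG `E` with respect to
the pair of collections of triples `(Om, OmBar)`. -/
def DNAFaithful {α : Type*} [mα : MeasurableSpace α] [StandardBorelSpace α]
    (μ : Measure α) [IsFiniteMeasure μ] (X : V → α → ℝ) (hX : ∀ w : V, Measurable (X w))
    (E : V → V → Prop) (Om OmBar : Set (V × V × Set V)) : Prop :=
  (∀ T ∈ Om, CondIndepGiven μ X hX T.1 T.2.1 T.2.2) ∧
  (∀ T ∈ OmBar, ¬ CondIndepGiven μ X hX T.1 T.2.1 T.2.2) ∧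
  (∀ (u v z : V) (S : Set V), (u, v, S) ∈ Om → (u, v, insert z S) ∈ OmBar →
    DSep E S u v)


/-! Faithfulness and the Markov property turn the two test outcomes into graphical facts: `u` and
`v` are d-separated given `S` but d-connected given `S ∪ {z}`. Both are invariant under Markov
equivalence, so it suffices to show that in a DAG they rule out `z ⇝ u`, `z ⇝ v` and `z ⇝ s` for
`s ∈ S`. If `z ⇝ s ∈ S`, every collider that is an ancestor of `z` is one of `s`, so conditioning
on `z` opens no new path. If `z ⇝ u`, take a path d-connecting given `S ∪ {z}` and on it the last
collider `c` that is an ancestor of `z` but of no element of `S`; replacing the part before `c`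
by the directed path `c ⇝ z ⇝ u`, traversed backwards, gives a walk that d-connects `u` and `v`
given `S`, and every d-connecting walk can be shortened to a d-connecting path. -/

namespace List

variable {α : Type*}

def ForallTriples (P : α → α → α → Prop) (l : List α) : Prop :=
  ∀ a x b : α, [a, x, b] <:+: l → P a x b

section ForallTriples

variable {P Q : α → α → α → Prop} {l l₁ l₂ : List α}

theorem ForallTriples.infix (h : ForallTriples P l) (h' : l₁ <:+: l) : ForallTriples P l₁ :=
  fun a x b ht => h a x b (ht.trans h')

theorem ForallTriples.imp (H : ∀ a x b, P a x b → Q a x b) (h : ForallTriples P l) :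
    ForallTriples Q l :=
  fun a x b ht => H a x b (h a x b ht)

theorem forallTriples_reverse :
    ForallTriples P l.reverse ↔ ForallTriples (fun a x b => P b x a) l := by
  refine ⟨fun h a x b ht => h b x a ?_, fun h a x b ht => h b x a ?_⟩
  · simpa using reverse_infix.mpr ht
  · simpa using reverse_infix.mp (by simpa using ht)

theorem triple_infix_append {a x b : α} :
    ∀ {l₁ l₂ : List α}, [a, x, b] <:+: l₁ ++ l₂ →
      [a, x, b] <:+: l₁ ∨ [a, x, b] <:+: l₂ ∨
      (∃ s t, l₁ = s ++ [a, x] ∧ l₂ = b :: t) ∨ (∃ s t, l₁ = s ++ [a] ∧ l₂ = x :: b :: t)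
  | [], _, h => Or.inr (Or.inl (by simpa using h))
  | c :: l₁, l₂, h => by
    rcases infix_cons_iff.mp h with ⟨t, ht⟩ | h
    · match l₁, ht with
      | [], ht =>
        obtain ⟨rfl, rfl⟩ : a = c ∧ x :: b :: t = l₂ := by simpa using ht
        exact Or.inr (Or.inr (Or.inr ⟨[], t, rfl, rfl⟩))
      | [d], ht =>
        obtain ⟨rfl, rfl, rfl⟩ : a = c ∧ x = d ∧ b :: t = l₂ := by simpa using ht
        exact Or.inr (Or.inr (Or.inl ⟨[], t, rfl, rfl⟩))
      | d :: e :: l₁, ht =>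
        obtain ⟨rfl, rfl, rfl, -⟩ : a = c ∧ x = d ∧ b = e ∧ t = l₁ ++ l₂ := by simpa using ht
        exact Or.inl ⟨[], l₁, rfl⟩
    · rcases triple_infix_append h with h | h | ⟨s, t, rfl, rfl⟩ | ⟨s, t, rfl, rfl⟩
      · exact Or.inl (h.trans (suffix_cons c l₁).isInfix)
      · exact Or.inr (Or.inl h)
      · exact Or.inr (Or.inr (Or.inl ⟨c :: s, t, rfl, rfl⟩))
      · exact Or.inr (Or.inr (Or.inr ⟨c :: s, t, rfl, rfl⟩))

theorem ForallTriples.append_cons {c : α} (h₁ : ForallTriples P (l₁ ++ [c]))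
    (h₂ : ForallTriples P (c :: l₂)) (hc : ∀ a ∈ l₁.getLast?, ∀ b ∈ l₂.head?, P a c b) :
    ForallTriples P (l₁ ++ c :: l₂) := by
  intro a x b ht
  have ht : [a, x, b] <:+: (l₁ ++ [c]) ++ l₂ := by simpa using ht
  rcases triple_infix_append ht with h | h | ⟨s, t, hs, rfl⟩ | ⟨s, t, hs, rfl⟩
  · exact h₁ a x b h
  · exact h₂ a x b (h.trans (suffix_cons c l₂).isInfix)
  · obtain ⟨rfl, rfl⟩ : l₁ = s ++ [a] ∧ c = x :=
      append_singleton_inj.mp (hs.trans (by simp))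
    exact hc a (by simp) b (by simp)
  · obtain ⟨rfl, rfl⟩ := append_singleton_inj.mp hs
    exact h₂ _ _ _ ⟨[], t, rfl⟩

theorem exists_last_triple
    (h : ∃ a x b, [a, x, b] <:+: l ∧ Q a x b) :
    ∃ s a x b t, l = s ++ a :: x :: b :: t ∧ Q a x b ∧
      ForallTriples (fun a x b => ¬ Q a x b) (x :: b :: t) := by
  induction l with
  | nil =>
    obtain ⟨a, x, b, ht, -⟩ := h
    simpa using ht.length_le
  | cons c l ih =>
    by_cases hl : ∃ a x b, [a, x, b] <:+: l ∧ Q a x b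
    · obtain ⟨s, a, x, b, t, rfl, hQ, hlast⟩ := ih hl
      exact ⟨c :: s, a, x, b, t, rfl, hQ, hlast⟩
    · obtain ⟨a, x, b, ht, hQ⟩ := h
      rcases infix_cons_iff.mp ht with ⟨t, ht⟩ | ht
      · obtain ⟨rfl, rfl⟩ : a = c ∧ x :: b :: t = l := by simpa using ht
        exact ⟨[], a, x, b, t, rfl, hQ, fun a x b ht hQ => hl ⟨a, x, b, ht, hQ⟩⟩
      · exact absurd ⟨a, x, b, ht, hQ⟩ hl

end ForallTriples

theorem IsChain.rel_of_triple_infix {R : α → α → Prop} {l : List α} {a x b : α}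
    (h : IsChain R l) (ht : [a, x, b] <:+: l) : R a x ∧ R x b := by
  simpa using h.infix ht

theorem exists_eq_append_cons_append_cons_of_not_nodup {l : List α} (h : ¬ l.Nodup) :
    ∃ s a m t, l = s ++ a :: m ++ a :: t := by
  obtain ⟨a, ha⟩ := exists_duplicate_iff_not_nodup.mpr h
  obtain ⟨r₁, r₂, rfl, ha₁, ha₂⟩ := cons_sublist_iff.mp (duplicate_iff_sublist.mp ha)
  obtain ⟨s, m, rfl⟩ := append_of_mem ha₁
  obtain ⟨m', t, rfl⟩ := append_of_mem (singleton_sublist.mp ha₂)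
  exact ⟨s, a, m ++ m', t, by simp⟩

end List

section DSeparation

open List

variable {E : V → V → Prop} {C S : Set V} {a b c u v w x z : V}

/-- `IsDConnectingPath E C p` unfolds to `p.ForallTriples (DConnAt E C)`, which makes sense for
walks as well as for paths. -/
def DConnAt (E : V → V → Prop) (C : Set V) (a x b : V) : Prop :=
  ((E a x ∧ E b x) → ∃ c ∈ C, Anc E x c) ∧ (¬ (E a x ∧ E b x) → x ∉ C)

theorem dConnAt_comm : DConnAt E C a x b ↔ DConnAt E C b x a := by
  simp only [DConnAt, and_comm (a := E a x)]

theorem DConnAt.of_insert (h : DConnAt E (insert z S) a x b)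
    (hz : E a x ∧ E b x → Anc E x z → ∃ s ∈ S, Anc E x s) : DConnAt E S a x b := by
  refine ⟨fun hcol => ?_, fun hnc hx => h.2 hnc (Set.mem_insert_of_mem z hx)⟩
  obtain ⟨c, hc, hxc⟩ := h.1 hcol
  rcases Set.mem_insert_iff.mp hc with rfl | hcS
  · exact hz hcol hxc
  · exact ⟨c, hcS, hxc⟩

theorem Acyclic.asymm (hE : Acyclic E) (h : E a b) : ¬ E b a :=
  fun h' => hE a ((Relation.TransGen.single h).tail h')

theorem DConn.symm (h : DConn E C u v) : DConn E C v u := by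
  obtain ⟨p, ⟨hnd, hch⟩, hu, hv, hdc⟩ := h
  refine ⟨p.reverse, ⟨nodup_reverse.mpr hnd, ?_⟩, by simpa using hv, by simpa using hu, ?_⟩
  · exact isChain_reverse.mpr (hch.imp fun _ _ => Or.symm)
  · exact forallTriples_reverse.mpr (ForallTriples.imp (fun _ _ _ => dConnAt_comm.mp) hdc)

theorem DSep.symm (h : DSep E C u v) : DSep E C v u := fun h' => h h'.symm

theorem Acyclic.exists_collider_of_anc (hE : Acyclic E) :
    ∀ {l : List V} {a x : V}, E a x → (x :: l).IsChain (Adjacent E) → Anc E w a →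
      (x :: l).getLast? = some w →
      ∃ c y d, [c, y, d] <:+: a :: x :: l ∧ E c y ∧ E d y ∧ Anc E w y
  | [], a, x, hax, _, hwa, hl => by
    obtain rfl : x = w := by simpa using hl
    exact absurd (Relation.TransGen.tail' hwa hax) (hE x)
  | y :: l, a, x, hax, hch, hwa, hl => by
    have hwx : Anc E w x := hwa.tail hax
    rcases (isChain_cons_cons.mp hch).1 with hxy | hyx
    · obtain ⟨c, y', d, ht, h⟩ :=
        hE.exists_collider_of_anc hxy (isChain_cons_cons.mp hch).2 hwx (by simpa using hl)
      exact ⟨c, y', d, ht.trans (suffix_cons a _).isInfix, h⟩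
    · exact ⟨a, x, y, ⟨[], l, rfl⟩, hax, hyx, hwx⟩

theorem Acyclic.dConnAt_of_loop (hE : Acyclic E) {m : List V} (hm : m ≠ [])
    (hch : (a :: w :: m ++ [w, b]).IsChain (Adjacent E))
    (hdc : (a :: w :: m ++ [w, b]).ForallTriples (DConnAt E C)) : DConnAt E C a w b := by
  obtain ⟨m₀, m', hm₀⟩ := exists_cons_of_ne_nil hm
  obtain ⟨m'', y, hy⟩ : ∃ m'' y, m = m'' ++ [y] := ⟨_, _, (dropLast_append_getLast hm).symm⟩
  have hfirst : [a, w, m₀] <:+: a :: w :: m ++ [w, b] := ⟨[], m' ++ [w, b], by simp [hm₀]⟩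
  have hlast : [y, w, b] <:+: a :: w :: m ++ [w, b] := ⟨a :: w :: m'', [], by simp [hy]⟩
  obtain ⟨haw, hwm⟩ := hch.rel_of_triple_infix hfirst
  constructor
  · intro hcol
    rcases hwm with hwm | hmw
    · have hloop : m₀ :: (m' ++ [w]) <:+: a :: w :: m ++ [w, b] := ⟨[a, w], [b], by simp [hm₀]⟩
      obtain ⟨c, y', d, ht, hcy, hdy, hwy⟩ :=
        hE.exists_collider_of_anc hwm (hch.infix hloop) .refl
          (by rw [← cons_append, getLast?_concat])
      obtain ⟨s, hs, hys⟩ := (hdc c y' d (ht.trans ⟨[a], [b], by simp [hm₀]⟩)).1 ⟨hcy, hdy⟩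
      exact ⟨s, hs, hwy.trans hys⟩
    · exact (hdc a w m₀ hfirst).1 ⟨hcol.1, hmw⟩
  · intro hnc
    rcases haw with haw | hwa
    · rcases (hch.rel_of_triple_infix hlast).2 with hwb | hbw
      · exact (hdc y w b hlast).2 fun h => hE.asymm hwb h.2
      · exact absurd ⟨haw, hbw⟩ hnc
    · exact (hdc a w m₀ hfirst).2 fun h => hE.asymm hwa h.1

theorem Acyclic.isChain_forallTriples_of_loop (hE : Acyclic E) {s m t : List V}
    (hch : (s ++ w :: m ++ w :: t).IsChain (Adjacent E))
    (hdc : (s ++ w :: m ++ w :: t).ForallTriples (DConnAt E C)) :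
    (s ++ w :: t).IsChain (Adjacent E) ∧ (s ++ w :: t).ForallTriples (DConnAt E C) := by
  have hpre : s ++ [w] <:+: s ++ w :: m ++ w :: t := ⟨[], m ++ w :: t, by simp⟩
  have hsuf : w :: t <:+: s ++ w :: m ++ w :: t := ⟨s ++ w :: m, [], by simp⟩
  refine ⟨?_, (hdc.infix hpre).append_cons (hdc.infix hsuf) fun a ha b hb => ?_⟩
  · simpa using (hch.infix hpre).append_overlap (l₃ := t) (hch.infix hsuf) (cons_ne_nil w [])
  obtain ⟨s, rfl⟩ := getLast?_eq_some_iff.mp ha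
  obtain ⟨t, rfl⟩ := head?_eq_some_iff.mp hb
  have hm : m ≠ [] := by
    rintro rfl
    have hww : Adjacent E w w := isChain_pair.mp (hch.infix ⟨s ++ [a], b :: t, by simp⟩)
    rcases hww with h | h <;> exact hE.asymm h h
  have hloop : a :: w :: m ++ [w, b] <:+: s ++ [a] ++ w :: m ++ w :: b :: t := ⟨s, t, by simp⟩
  exact hE.dConnAt_of_loop hm (hch.infix hloop) (hdc.infix hloop)

theorem Acyclic.dConn_of_walk (hE : Acyclic E) {p : List V} (hch : p.IsChain (Adjacent E))
    (hdc : p.ForallTriples (DConnAt E C)) (hu : p.head? = some u) (hv : p.getLast? = some v) :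
    DConn E C u v := by
  by_cases hnd : p.Nodup
  · exact ⟨p, ⟨hnd, hch⟩, hu, hv, hdc⟩
  obtain ⟨s, w, m, t, rfl⟩ := exists_eq_append_cons_append_cons_of_not_nodup hnd
  obtain ⟨hch', hdc'⟩ := hE.isChain_forallTriples_of_loop hch hdc
  refine hE.dConn_of_walk hch' hdc' (by simpa using hu) ?_
  rwa [getLast?_append_cons] at hv ⊢
termination_by p.length
decreasing_by simp_all

theorem DSep.insert_of_anc_of_mem (hsep : DSep E S u v) {s : V} (hs : s ∈ S) (hzs : Anc E z s) :
    DSep E (insert z S) u v := by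
  rintro ⟨p, hp, hu, hv, hdc⟩
  exact hsep ⟨p, hp, hu, hv, fun a x b ht =>
    DConnAt.of_insert (hdc a x b ht) fun _ hxz => ⟨s, hs, hxz.trans hzs⟩⟩

theorem Acyclic.forallTriples_dConnAt_of_isChain (hE : Acyclic E) {l : List V}
    (hch : (c :: l).IsChain E) (hcS : ∀ s ∈ S, ¬ Anc E c s) :
    (c :: l).ForallTriples (DConnAt E S) := by
  intro a x b ht
  have hcx : Anc E c x := hch.induction (Anc E c ·) _ (fun _ _ h hx => hx.tail h)
    (fun _ => .refl) x (ht.subset (by simp))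
  exact ⟨fun hcol => absurd hcol.2 (hE.asymm (hch.rel_of_triple_infix ht).2),
    fun _ hxS => hcS x hxS hcx⟩

theorem Acyclic.dConn_of_walk_of_anc (hE : Acyclic E) {t : List V}
    (hch : (c :: b :: t).IsChain (Adjacent E)) (hdc : (c :: b :: t).ForallTriples (DConnAt E S))
    (hbc : E b c) (hcS : ∀ s ∈ S, ¬ Anc E c s) (hcu : Anc E c u)
    (hv : (b :: t).getLast? = some v) : DConn E S u v := by
  obtain ⟨l, hl, hlu⟩ := exists_isChain_cons_of_relationReflTransGen hcu
  have hwalk : (c :: l).reverse ++ b :: t = l.reverse ++ c :: b :: t := by simp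
  refine hE.dConn_of_walk (p := (c :: l).reverse ++ b :: t) ?_ ?_ ?_ ?_
  · refine (isChain_reverse.mpr (hl.imp fun _ _ => Or.inr)).append hch.tail ?_
    simp [hbc]
  · rw [hwalk]
    refine ForallTriples.append_cons ?_ hdc fun a ha b _ => ?_
    · rw [← reverse_cons, forallTriples_reverse]
      exact (hE.forallTriples_dConnAt_of_isChain hl hcS).imp fun _ _ _ => dConnAt_comm.mp
    · obtain ⟨l, rfl⟩ : ∃ l', l = a :: l' := head?_eq_some_iff.mp (by simpa using ha)
      exact ⟨fun hcol => absurd hcol.1 (hE.asymm (isChain_cons_cons.mp hl).1),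
        fun _ hcS' => hcS c hcS' .refl⟩
  · rw [head?_append, head?_reverse, getLast?_eq_some_getLast (cons_ne_nil c l), hlu]
    rfl
  · simpa [getLast?_append_cons] using hv

theorem Acyclic.dSep_insert_of_anc_left (hE : Acyclic E) (hsep : DSep E S u v)
    (hzu : Anc E z u) : DSep E (insert z S) u v := by
  rintro ⟨p, hp, hu, hv, hdc⟩
  by_cases hbad : ∃ a x b, [a, x, b] <:+: p ∧
      E a x ∧ E b x ∧ Anc E x z ∧ ¬ ∃ s ∈ S, Anc E x s
  · obtain ⟨s, a, c, b, t, rfl, ⟨-, hbc, hcz, hcS⟩, hgood⟩ :=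
      exists_last_triple hbad
    have hsuf : c :: b :: t <:+: s ++ a :: c :: b :: t := ⟨s ++ [a], [], by simp⟩
    refine hsep (hE.dConn_of_walk_of_anc (hp.2.infix hsuf) (fun a' x b' ht => ?_) hbc
      (by simpa using hcS) (hcz.trans hzu) (by simpa [getLast?_append_cons] using hv))
    refine DConnAt.of_insert (hdc a' x b' (ht.trans hsuf)) fun hcol hxz => ?_
    by_contra hxS
    exact hgood a' x b' ht ⟨hcol.1, hcol.2, hxz, hxS⟩
  · refine hsep ⟨p, hp, hu, hv, fun a x b ht => DConnAt.of_insert (hdc a x b ht) ?_⟩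
    intro hcol hxz
    by_contra hxS
    exact hbad ⟨a, x, b, ht, hcol.1, hcol.2, hxz, hxS⟩

theorem defNonAnc_of_dSep_of_dConn_insert (huv : u ≠ v) (huz : u ≠ z) (hvz : v ≠ z)
    (huS : u ∉ S) (hvS : v ∉ S) (hsep : DSep E S u v) (hconn : DConn E (insert z S) u v) :
    DefNonAnc E z u ∧ DefNonAnc E z v ∧ ∀ s ∈ S, DefNonAnc E z s := by
  have transfer : ∀ E', MarkovEquiv E E' → DSep E' S u v ∧ ¬ DSep E' (insert z S) u v :=
    fun E' hme => ⟨(hme u v S huv huS hvS).mp hsep, fun h =>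
      (hme u v _ huv (by simp [huz, huS]) (by simp [hvz, hvS])).mpr h hconn⟩
  refine ⟨fun E' hE' hme hzu => ?_, fun E' hE' hme hzv => ?_, fun s hs E' hE' hme hzs => ?_⟩ <;>
    obtain ⟨hsep', hconn'⟩ := transfer E' hme
  · exact hconn' (hE'.dSep_insert_of_anc_left hsep' hzu)
  · exact hconn' (hE'.dSep_insert_of_anc_left hsep'.symm hzv).symm
  · exact hconn' (hsep'.insert_of_anc_of_mem hs hzs)

end DSeparation

theorem stmt6_general {α : Type*} [mα : MeasurableSpace α] [StandardBorelSpace α]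
    (μ : Measure α) [IsProbabilityMeasure μ]
    (X : V → α → ℝ) (hX : ∀ w : V, Measurable (X w))
    (E : V → V → Prop)
    (Om OmBar : Set (V × V × Set V))
    (hMarkov : MarkovTo μ X hX E)
    (hFaith : DNAFaithful μ X hX E Om OmBar) :
    ∀ (u v z : V) (S : Set V), u ≠ v → u ≠ z → v ≠ z →
      u ∉ S → v ∉ S → z ∉ S →
      (u, v, S) ∈ Om → (u, v, insert z S) ∈ OmBar →
      DefNonAnc E z u ∧ DefNonAnc E z v ∧ ∀ s ∈ S, DefNonAnc E z s := by
  intro u v z S huv huz hvz huS hvS _ hOm hBar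
  obtain ⟨-, hBarDep, hSep⟩ := hFaith
  refine defNonAnc_of_dSep_of_dConn_insert huv huz hvz huS hvS (hSep u v z S hOm hBar) ?_
  exact of_not_not fun hsep => hBarDep _ hBar
    (hMarkov u v _ huv (by simp [huz, huS]) (by simp [hvz, hvS]) hsep)

/-- Theorem 1, correctness of DNA learning: under the Markov
and DNA-faithfulness assumptions, every relation recorded by Algorithm 1 --
i.e. obtained from `(u,v,S) ∈ Ω` and `(u,v,S ∪ {z}) ∈ Ω̄` -- is a true definite
non-ancestral relation. -/
theorem stmt6 [Fintype V] {α : Type*} [mα : MeasurableSpace α] [StandardBorelSpace α]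
    (μ : Measure α) [IsProbabilityMeasure μ]
    (X : V → α → ℝ) (hX : ∀ w : V, Measurable (X w))
    (E : V → V → Prop) (hE : Acyclic E)
    (Om OmBar : Set (V × V × Set V))
    (hMarkov : MarkovTo μ X hX E)
    (hFaith : DNAFaithful μ X hX E Om OmBar) :
    ∀ (u v z : V) (S : Set V), u ≠ v → u ≠ z → v ≠ z →
      u ∉ S → v ∉ S → z ∉ S →
      (u, v, S) ∈ Om → (u, v, insert z S) ∈ OmBar →
      DefNonAnc E z u ∧ DefNonAnc E z v ∧ ∀ s ∈ S, DefNonAnc E z s :=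
  stmt6_general (mα := mα) μ X hX E Om OmBar hMarkov hFaith
end

section
/- Let G=(V,E) be a DAG and let u,v be distinct vertices and S ⊆ V∖{u,v}. If u and v are d-separated given S in G, then u and v are d-separated given S ∩ (an(G,u) ∪ an(G,v)) in G. -/
/-! Basic graphical-model definitions: DAGs as binary relations on a finite
vertex type, d-separation via paths (lists of vertices), Markov equivalence,
and definite (non-)ancestral relations. -/

variable {V : Type*}

/-! A path that d-connects `u` and `v` given `S ∩ an(u, v)` already d-connects them given `S`.
Colliders are ancestors of `S ∩ an(u, v) ⊆ S`, and in particular lie in the ancestral set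
`an(u, v)`. A non-collider `x` has an outgoing edge on the path; following the path in that
direction, the first change of direction is a collider, and if there is none we reach `u` or `v`.
Either way `x` is an ancestor of a vertex of `an(u, v)`, so `x ∉ S` because `x ∉ S ∩ an(u, v)`. -/

theorem List.IsSuffix.getLast?_eq {α : Type*} {l r : List α} (h : l <:+ r) (hl : l ≠ []) :
    l.getLast? = r.getLast? := by
  obtain ⟨s, rfl⟩ := h
  rw [List.getLast?_append_of_ne_nil s hl]

def IsAncestral (E : V → V → Prop) (W : Set V) : Prop :=
  ∀ x y, Anc E x y → y ∈ W → x ∈ W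

namespace IsAncestral

variable {E : V → V → Prop} {W : Set V} {p : List V}

theorem mem_of_edge_of_suffix (hW : IsAncestral E W) (hp : p.IsChain (Adjacent E))
    (hcoll : ∀ a y c, [a, y, c] <:+: p → E a y → E c y → y ∈ W)
    (hlast : ∀ z ∈ p.getLast?, z ∈ W) (t : List V) {x b : V}
    (hsuf : x :: b :: t <:+ p) (hxb : E x b) : x ∈ W := by
  refine hW x b (.single hxb) ?_
  induction t generalizing x b with
  | nil =>
    refine hlast b ?_
    rw [← hsuf.getLast?_eq (List.cons_ne_nil _ _)]
    rfl
  | cons w t ih =>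
    by_cases hwb : E w b
    · exact hcoll x b w (List.infix_append [] [x, b, w] t |>.trans hsuf.isInfix) hxb hwb
    · have hbw : Adjacent E b w :=
        (List.isChain_cons_cons.mp (List.isChain_cons_cons.mp (hp.infix hsuf.isInfix)).2).1
      have hbw : E b w := hbw.resolve_right hwb
      exact hW b w (.single hbw) (ih ((List.suffix_cons x _).trans hsuf) hbw)

theorem mem_of_not_collider (hW : IsAncestral E W) (hp : p.IsChain (Adjacent E))
    (hcoll : ∀ a y c, [a, y, c] <:+: p → E a y → E c y → y ∈ W)
    (hhead : ∀ z ∈ p.head?, z ∈ W) (hlast : ∀ z ∈ p.getLast?, z ∈ W)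
    {a x b : V} (hx : [a, x, b] <:+: p) (hnc : ¬ (E a x ∧ E b x)) : x ∈ W := by
  obtain ⟨s, t, rfl⟩ := hx
  have hadj : List.IsChain (Adjacent E) [a, x, b] := hp.infix ⟨s, t, rfl⟩
  by_cases hbx : E b x
  · have hxa : E x a :=
      (List.isChain_cons_cons.mp hadj).1.resolve_left fun hax => hnc ⟨hax, hbx⟩
    have hp' : (s ++ [a, x, b] ++ t).reverse.IsChain (Adjacent E) :=
      List.isChain_reverse.mpr (hp.imp fun _ _ h => h.symm)
    have hcoll' : ∀ a' y c', [a', y, c'] <:+: (s ++ [a, x, b] ++ t).reverse →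
        E a' y → E c' y → y ∈ W := fun a' y c' hy ha' hc' =>
      hcoll c' y a' (by simpa using hy.reverse) hc' ha'
    refine hW.mem_of_edge_of_suffix hp' hcoll' (by rwa [List.getLast?_reverse]) s.reverse
      ⟨t.reverse ++ [b], by simp⟩ hxa
  · have hxb : E x b :=
      (List.isChain_cons_cons.mp (List.isChain_cons_cons.mp hadj).2).1.resolve_right hbx
    exact hW.mem_of_edge_of_suffix hp hcoll hlast t ⟨s ++ [a], by simp⟩ hxb

end IsAncestral

theorem IsDConnectingPath.of_inter_ancestral {E : V → V → Prop} {C W : Set V} {p : List V}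
    (hW : IsAncestral E W) (hp : p.IsChain (Adjacent E))
    (hhead : ∀ z ∈ p.head?, z ∈ W) (hlast : ∀ z ∈ p.getLast?, z ∈ W)
    (h : IsDConnectingPath E (C ∩ W) p) : IsDConnectingPath E C p := by
  have hcoll : ∀ a y c, [a, y, c] <:+: p → E a y → E c y → y ∈ W := fun a y c hy hay hcy =>
    let ⟨d, hd, hyd⟩ := (h a y c hy).1 ⟨hay, hcy⟩
    hW y d hyd hd.2
  intro a x b hx
  refine ⟨fun hc => ?_, fun hnc hxC => ?_⟩
  · obtain ⟨d, hd, hxd⟩ := (h a x b hx).1 hc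
    exact ⟨d, hd.1, hxd⟩
  · exact (h a x b hx).2 hnc ⟨hxC, hW.mem_of_not_collider hp hcoll hhead hlast hx hnc⟩

theorem stmt11_general (E : V → V → Prop) (u v : V)
    (S : Set V)
    (hsep : DSep E S u v) :
    DSep E (S ∩ {w : V | Anc E w u ∨ Anc E w v}) u v := by
  rintro ⟨p, hp, hhead, hlast, hconn⟩
  have hW : IsAncestral E {w | Anc E w u ∨ Anc E w v} := fun x y hxy hy =>
    hy.imp hxy.trans hxy.trans
  refine hsep ⟨p, hp, hhead, hlast, hconn.of_inter_ancestral hW hp.2 ?_ ?_⟩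
  · rw [hhead]
    rintro _ ⟨⟩
    exact .inl .refl
  · rw [hlast]
    rintro _ ⟨⟩
    exact .inr .refl

/-- key step of Lemma 5: if `u` and `v` are d-separated
given `S`, then they are d-separated given `S ∩ (an(u) ∪ an(v))`. -/
theorem stmt11 [Fintype V] (E : V → V → Prop) (hE : Acyclic E) (u v : V) (huv : u ≠ v)
    (S : Set V) (hSu : u ∉ S) (hSv : v ∉ S)
    (hsep : DSep E S u v) :
    DSep E (S ∩ {w : V | Anc E w u ∨ Anc E w v}) u v :=
  stmt11_general E u v S hsep
end

section
/- (Swap lemma.) Let G be a DAG and let π = (X, u, Y, v, Z) be a topological ordering of G, written as the concatenation of the block X, the single vertex u, the block Y, the single vertex v, and the block Z, with u ∉ an(G,v). Let A = Y ∩ an(G,v). Then the ordering (X, A, v, u, Y∖A, Z), in which the vertices inside each of A and Y∖A keep their relative order from π, is also a topological ordering of G. -/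
/-! Basic graphical-model definitions: DAGs as binary relations on a finite
vertex type, d-separation via paths (lists of vertices), Markov equivalence,
and definite (non-)ancestral relations. -/

variable {V : Type*}

/-- A list of vertices is a topological ordering of the digraph `E` if it
enumerates all vertices without repetition and every edge goes from an earlier
to a later position. -/
def IsTopoList [DecidableEq V] (E : V → V → Prop) (l : List V) : Prop :=
  l.Nodup ∧ (∀ x : V, x ∈ l) ∧ ∀ a b : V, E a b → l.idxOf a < l.idxOf b

/- An edge `b → a` into an ancestor `a` of `v` makes `b` an ancestor of `v` too. Hence no edge
runs from a non-ancestor of `v` to an ancestor of `v`, and within the block `u, Y, v` one may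
move all ancestors of `v` (those of `A`, and `v`, but not `u`) in front of the non-ancestors
(`u` and `Y ∖ A`), keeping the relative order on each side, without reversing an edge. -/

open List

namespace List

variable {α : Type*} {R : α → α → Prop}

theorem Pairwise.filter_append_filter_not {p : α → Bool} {l : List α} (hl : l.Pairwise R)
    (hcross : ∀ a ∈ l, ∀ b ∈ l, p a → ¬ p b → R a b) :
    (l.filter p ++ l.filter (fun a => !p a)).Pairwise R := by
  refine pairwise_append.2 ⟨hl.filter _, hl.filter _, fun a ha b hb => ?_⟩
  simp only [mem_filter, Bool.not_eq_true'] at ha hb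
  exact hcross a ha.1 b hb.1 ha.2 (by simp [hb.2])

theorem Pairwise.append_middle_of_perm {X W W' Z : List α} (h : (X ++ W ++ Z).Pairwise R)
    (hW : W' ~ W) (hW' : W'.Pairwise R) : (X ++ W' ++ Z).Pairwise R := by
  simp only [pairwise_append, mem_append, hW.mem_iff] at h ⊢
  tauto

end List

section TopoList

variable [DecidableEq V] {E : V → V → Prop}

theorem isTopoList_iff_pairwise (hirr : ∀ a, ¬ E a a) {l : List V} :
    IsTopoList E l ↔ l.Nodup ∧ (∀ x, x ∈ l) ∧ l.Pairwise (fun a b => ¬ E b a) := by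
  refine and_congr_right fun hnd => and_congr_right fun hall => ⟨fun hidx => ?_, fun hpw => ?_⟩
  · refine pairwise_iff_getElem.2 fun i j hi hj hij hji => ?_
    have := hidx _ _ hji
    rw [hnd.idxOf_getElem, hnd.idxOf_getElem] at this
    omega
  · intro a b hab
    have ha := idxOf_lt_length_iff.2 (hall a)
    have hb := idxOf_lt_length_iff.2 (hall b)
    rcases lt_trichotomy (l.idxOf a) (l.idxOf b) with hlt | heq | hgt
    · exact hlt
    · obtain rfl := (idxOf_inj (hall a)).1 heq
      exact absurd hab (hirr a)
    · have := pairwise_iff_getElem.1 hpw _ _ hb ha hgt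
      rw [getElem_idxOf, getElem_idxOf] at this
      exact absurd hab this

theorem IsTopoList.of_perm (hirr : ∀ a, ¬ E a a) {l l' : List V} (hl : IsTopoList E l)
    (hperm : l' ~ l) (hpw : l'.Pairwise (fun a b => ¬ E b a)) : IsTopoList E l' := by
  obtain ⟨hnd, hall, -⟩ := (isTopoList_iff_pairwise hirr).1 hl
  exact (isTopoList_iff_pairwise hirr).2 ⟨hperm.nodup_iff.2 hnd, fun x => hperm.mem_iff.2 (hall x), hpw⟩

end TopoList

theorem stmt12_general [DecidableEq V] (E : V → V → Prop) (hE : Acyclic E)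
    (X Y Z : List V) (u v : V)
    [inst : ∀ y : V, Decidable (Anc E y v)]
    (hord : IsTopoList E (X ++ u :: (Y ++ v :: Z)))
    (hnanc : ¬ Anc E u v) :
    IsTopoList E
      (X ++ (Y.filter fun y => decide (Anc E y v)) ++
        v :: u :: ((Y.filter fun y => decide (¬ Anc E y v)) ++ Z)) := by
  have hirr : ∀ a, ¬ E a a := fun a h => hE a (.single h)
  set p : V → Bool := fun y => decide (Anc E y v)
  set W := u :: (Y ++ [v])
  have hold : X ++ u :: (Y ++ v :: Z) = X ++ W ++ Z := by simp [W]
  have hnew : X ++ Y.filter p ++ v :: u :: (Y.filter (fun y => decide (¬ Anc E y v)) ++ Z) =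
      X ++ (W.filter p ++ W.filter (fun y => !p y)) ++ Z := by
    have hvv : Anc E v v := Relation.ReflTransGen.refl
    simp [W, p, hnanc, hvv]
  have hW : W.filter p ++ W.filter (fun y => !p y) ~ W := filter_append_perm p W
  rw [hold] at hord
  rw [hnew]
  have hpw := ((isTopoList_iff_pairwise hirr).1 hord).2.2
  refine hord.of_perm hirr (by simpa only [append_assoc] using (hW.append_right Z).append_left X) ?_
  refine hpw.append_middle_of_perm hW (Pairwise.filter_append_filter_not ?_ ?_)
  · exact hpw.sublist ((sublist_append_right X W).trans (sublist_append_left _ Z))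
  · intro a _ b _ ha hb hba
    simp only [p, decide_eq_true_eq] at ha hb
    exact hb (.head hba ha)

/-- swap lemma from the proof of Lemma 4: if
`(X, u, Y, v, Z)` is a topological ordering of `E` with `u ∉ an(v)` and
`A = Y ∩ an(v)`, then `(X, A, v, u, Y ∖ A, Z)` is also a topological ordering
of `E`. -/
theorem stmt12 [Fintype V] [DecidableEq V] (E : V → V → Prop) (hE : Acyclic E)
    (X Y Z : List V) (u v : V)
    [inst : ∀ y : V, Decidable (Anc E y v)]
    (hord : IsTopoList E (X ++ u :: (Y ++ v :: Z)))
    (hnanc : ¬ Anc E u v) :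
    IsTopoList E
      (X ++ (Y.filter fun y => decide (Anc E y v)) ++
        v :: u :: ((Y.filter fun y => decide (¬ Anc E y v)) ++ Z)) :=
  stmt12_general E hE X Y Z u v (inst := inst) hord hnanc
end

section
/- Let G be a DAG with CPDAG G*, and let (a,u,a') be an unshielded triple in G* (a and a' are both adjacent to u but not adjacent to each other) such that both edges a−u and a'−u are undirected in G*. Then every DAG G' ∈ [G] contains the edge u→a or the edge u→a'. -/
/-! Basic graphical-model definitions: DAGs as binary relations on a finite
vertex type, d-separation via paths (lists of vertices), Markov equivalence,
and definite (non-)ancestral relations. -/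

variable {V : Type*}

/-!
If some member `E'` of the class contained neither `u → a` nor `u → a'`, then `a → u ← a'` would
be an unshielded collider of `E'`. Unshielded colliders are shared by Markov equivalent DAGs:
`a` and `a'` are d-separated in `E'` by their proper ancestors, which exclude `u`, so in any other
member the path `a − u − a'` must be blocked at `u`, i.e. `u` is a collider there too. Hence
`a → u` would hold in every member, so the CPDAG would direct `a − u`.
-/

variable {E : V → V → Prop}

namespace Acyclic

theorem irrefl (hE : Acyclic E) (x : V) : ¬ E x x :=
  fun h => hE x (.single h)

theorem not_anc_of_rel (hE : Acyclic E) {x y : V} (hxy : E x y) : ¬ Anc E y x :=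
  fun h => hE x (.head' hxy h)

theorem asymm_s17 (hE : Acyclic E) {x y : V} (hxy : E x y) : ¬ E y x :=
  fun h => hE.not_anc_of_rel hxy (.single h)

theorem ne_of_rel (hE : Acyclic E) {x y : V} (hxy : E x y) : x ≠ y :=
  fun h => hE.irrefl y (h ▸ hxy)

end Acyclic

theorem IsDConnectingPath.of_infix {C : Set V} {p q : List V} (hp : IsDConnectingPath E C p)
    (hqp : q <:+: p) : IsDConnectingPath E C q :=
  fun a x b h => hp a x b (h.trans hqp)

/-- Following a d-connecting path forwards from an edge `x → y`, the directed stretch starting at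
`y` ends either at the last vertex or at a collider, which is an ancestor of `C`. -/
theorem anc_last_or_anc_mem_of_isDConnectingPath {C : Set V} {x y b : V} {p : List V}
    (hxy : E x y) (hch : List.IsChain (Adjacent E) (x :: y :: p))
    (hdc : IsDConnectingPath E C (x :: y :: p)) (hlast : (x :: y :: p).getLast? = some b) :
    Anc E y b ∨ ∃ c ∈ C, Anc E y c := by
  induction p generalizing x y with
  | nil =>
    obtain rfl : y = b := by simpa using hlast
    exact .inl .refl
  | cons z p ih =>
    by_cases hzy : E z y
    · exact .inr ((hdc x y z ⟨[], p, rfl⟩).1 ⟨hxy, hzy⟩)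
    have hyz : E y z := ((List.isChain_cons_cons.mp hch).2 |> List.isChain_cons_cons.mp).1
      |>.resolve_right hzy
    have hsuffix : y :: z :: p <:+: x :: y :: z :: p := (List.suffix_cons x _).isInfix
    rcases ih hyz (List.isChain_cons_cons.mp hch).2 (hdc.of_infix hsuffix)
      (by simpa using hlast) with h | ⟨c, hc, hanc⟩
    · exact .inl (.head hyz h)
    · exact .inr ⟨c, hc, .head hyz hanc⟩

theorem DConn.of_adjacent (C : Set V) {a b : V} (hab : a ≠ b) (hadj : Adjacent E a b) :
    DConn E C a b := by
  refine ⟨[a, b], ⟨by simp [hab], List.isChain_pair.mpr hadj⟩, rfl, rfl, ?_⟩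
  intro x y z h
  simpa using h.sublist.length_le

theorem dSep_of_not_adjacent (hE : Acyclic E) {a b : V} (hab : a ≠ b)
    (hnadj : ¬ Adjacent E a b) :
    DSep E {v | v ≠ a ∧ v ≠ b ∧ (Anc E v a ∨ Anc E v b)} a b := by
  set C : Set V := {v | v ≠ a ∧ v ≠ b ∧ (Anc E v a ∨ Anc E v b)}
  rintro ⟨p, ⟨hnd, hch⟩, hhead, hlast, hdc⟩
  obtain ⟨x, y, q, rfl⟩ : ∃ x y q, p = a :: x :: y :: q := by
    match p with
    | [] | [_] => simp_all
    | [a₀, b₀] =>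
      obtain ⟨rfl, rfl⟩ : a₀ = a ∧ b₀ = b := ⟨by simpa using hhead, by simpa using hlast⟩
      exact absurd (List.isChain_pair.mp hch) hnadj
    | _ :: x :: y :: q => exact ⟨x, y, q, by simp_all⟩
  obtain ⟨ha, hx, hy, -⟩ : a ∉ x :: y :: q ∧ x ∉ y :: q ∧ y ∉ q ∧ q.Nodup := by
    simpa only [List.nodup_cons] using hnd
  have hb : b ∈ y :: q := by
    rw [List.getLast?_cons_cons, List.getLast?_cons_cons] at hlast
    exact List.mem_of_getLast? hlast
  -- An interior vertex lying in `C` must be a collider. The first one, `x`, is in `C`, so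
  -- `a → x ← y`; then `y → x ⇝ b` puts `y` in `C` as a non-collider.
  have hxC : x ∈ C := by
    refine ⟨fun h => ha (h ▸ List.mem_cons_self), fun h => hx (h ▸ hb), ?_⟩
    rcases (List.isChain_cons_cons.mp hch).1 with hax | hxa
    · rcases anc_last_or_anc_mem_of_isDConnectingPath hax hch hdc hlast with h | ⟨c, hc, hxc⟩
      · exact .inr h
      · exact hc.2.2.imp hxc.trans hxc.trans
    · exact .inl (.single hxa)
  obtain ⟨hax, hyx⟩ : E a x ∧ E y x := by
    by_contra hncol
    exact (hdc a x y ⟨[], q, rfl⟩).2 hncol hxC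
  have hxb : Anc E x b := hxC.2.2.resolve_left (hE.not_anc_of_rel hax)
  have hyb : Anc E y b := .head hyx hxb
  match q, hy, hb, hlast, hdc with
  | [], _, hb, _, _ =>
    exact hE.not_anc_of_rel hyx ((List.mem_singleton.mp hb) ▸ hxb)
  | z :: q, hy, _, hlast, hdc =>
    have hb' : b ∈ z :: q := by
      rw [List.getLast?_cons_cons, List.getLast?_cons_cons, List.getLast?_cons_cons] at hlast
      exact List.mem_of_getLast? hlast
    have hyC : y ∈ C := ⟨fun h => ha (h ▸ by simp), fun h => hy (h ▸ hb'), .inr hyb⟩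
    exact (hdc x y z ⟨[a], q, rfl⟩).2 (fun hcol => hE.asymm_s17 hyx hcol.1) hyC

namespace MarkovEquiv

variable {E' E'' : V → V → Prop}

theorem symm (h : MarkovEquiv E E') : MarkovEquiv E' E :=
  fun u v C huv hu hv => (h u v C huv hu hv).symm

theorem trans (h : MarkovEquiv E E') (h' : MarkovEquiv E' E'') : MarkovEquiv E E'' :=
  fun u v C huv hu hv => (h u v C huv hu hv).trans (h' u v C huv hu hv)

theorem adjacent (heq : MarkovEquiv E E') (hE' : Acyclic E') {a b : V} (hab : a ≠ b)
    (hadj : Adjacent E a b) : Adjacent E' a b := by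
  by_contra hnadj
  exact (heq a b _ hab (fun h => h.1 rfl) (fun h => h.2.1 rfl)).mpr
    (dSep_of_not_adjacent hE' hab hnadj) (DConn.of_adjacent _ hab hadj)

theorem rel_of_unshielded_collider (heq : MarkovEquiv E E') (hE : Acyclic E) (hE' : Acyclic E')
    {a u a' : V} (haa' : a ≠ a') (hau : E a u) (ha'u : E a' u) (hnadj : ¬ Adjacent E a a') :
    E' a u := by
  set C : Set V := {v | v ≠ a ∧ v ≠ a' ∧ (Anc E v a ∨ Anc E v a')}
  have haC : a ∉ C := fun h => h.1 rfl
  have ha'C : a' ∉ C := fun h => h.2.1 rfl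
  have huC : u ∉ C := fun h => h.2.2.elim (hE.not_anc_of_rel hau) (hE.not_anc_of_rel ha'u)
  have hsep : DSep E' C a a' := (heq a a' C haa' haC ha'C).mp (dSep_of_not_adjacent hE haa' hnadj)
  have hadj : Adjacent E' a u := heq.adjacent hE' (hE.ne_of_rel hau) (.inl hau)
  have hadj' : Adjacent E' u a' := (heq.adjacent hE' (hE.ne_of_rel ha'u) (.inl ha'u)).symm
  by_contra hnau
  refine hsep ⟨[a, u, a'], ⟨?_, ?_⟩, rfl, rfl, ?_⟩
  · simp [hE.ne_of_rel hau, haa', (hE.ne_of_rel ha'u).symm]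
  · exact List.isChain_cons_cons.mpr ⟨hadj, List.isChain_pair.mpr hadj'⟩
  · intro x y z h
    obtain ⟨rfl, rfl, rfl⟩ : x = a ∧ y = u ∧ z = a' := by
      simpa using h.sublist.eq_of_length (by simp)
    exact ⟨fun hcol => absurd hcol.1 hnau, fun _ => huC⟩

end MarkovEquiv

theorem stmt17_general (E : V → V → Prop) (hE : Acyclic E) (a u a' : V)
    (hau : a ≠ u) (ha'u : a' ≠ u) (haa' : a ≠ a')
    (hadj1 : Adjacent E a u) (hadj2 : Adjacent E a' u)
    (hnonadj : ¬ Adjacent E a a')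
    (hundir1 : ¬ CPDAGDir E a u ∧ ¬ CPDAGDir E u a) :
    ∀ E' : V → V → Prop, Acyclic E' → MarkovEquiv E E' → E' u a ∨ E' u a' := by
  intro E' hE' heq
  by_contra! hcon
  have hE'au : E' a u := (heq.adjacent hE' hau hadj1).resolve_right hcon.1
  have hE'a'u : E' a' u := (heq.adjacent hE' ha'u hadj2).resolve_right hcon.2
  have hnadj' : ¬ Adjacent E' a a' := fun h => hnonadj (heq.symm.adjacent hE haa' h)
  refine hundir1.1 ⟨hadj1, fun E'' hE'' heq'' => ?_⟩
  exact (heq.symm.trans heq'').rel_of_unshielded_collider hE' hE'' haa' hE'au hE'a'u hnadj'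

/-- step of the proof of Lemma 1: if `(a, u, a')` is an
unshielded triple in the CPDAG of `E` whose two edges are both undirected, then
every member of the Markov equivalence class of `E` contains the edge `u → a`
or the edge `u → a'`. -/
theorem stmt17 [Fintype V] (E : V → V → Prop) (hE : Acyclic E) (a u a' : V)
    (hau : a ≠ u) (ha'u : a' ≠ u) (haa' : a ≠ a')
    (hadj1 : Adjacent E a u) (hadj2 : Adjacent E a' u)
    (hnonadj : ¬ Adjacent E a a')
    (hundir1 : ¬ CPDAGDir E a u ∧ ¬ CPDAGDir E u a)
    (hundir2 : ¬ CPDAGDir E a' u ∧ ¬ CPDAGDir E u a') :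
    ∀ E' : V → V → Prop, Acyclic E' → MarkovEquiv E E' → E' u a ∨ E' u a' :=
  stmt17_general E hE a u a' hau ha'u haa' hadj1 hadj2 hnonadj hundir1
end
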